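/- arXiv:1505.00607 — 3 statements merged into one kernel-verified Lean document; each statement's English description precedes it below -/
import Mathlib

section
/- The function g₁(r) = r K(r)² / artanh(r) is strictly increasing on (0,1). -/
open Real Set

/-- Complete elliptic integral of the first kind. -/
noncomputable def ellK (r : ℝ) : ℝ :=
  ∫ θ in (0:ℝ)..(π / 2), 1 / Real.sqrt (1 - r ^ 2 * Real.sin θ ^ 2)

/-- The inverse hyperbolic tangent. -/
noncomputable def artanh (r : ℝ) : ℝ := (1 / 2) * Real.log ((1 + r) / (1 - r))

/-!
Put `f r = r K(r)²` and `g = artanh`. Both vanish at `0`, and Legendre's formulas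
`K' = (E - (1 - r²) K) / (r (1 - r²))`, `E' = (E - K) / r` give
`f' / g' = (1 - r²) f' = K (2E - (1 - r²) K)`. Both factors are positive and increasing on
`(0, 1)`, the second one because its derivative is `(E - (1 - r²) K) / r > 0`, so the monotone
form of l'Hôpital's rule applies. The formula for `K'` rests on
`(1 - r²) ∫₀^{π/2} (1 - r² sin² θ)^{-3/2} dθ = E(r)`, which comes from integrating the
derivative of `r² sin θ cos θ / √(1 - r² sin² θ)` over `[0, π/2]`.
-/

open intervalIntegral

lemma strictMonoOn_Ioo_of_hasDerivAt_pos {f f' : ℝ → ℝ} {a b : ℝ}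
    (hf : ∀ x ∈ Ioo a b, HasDerivAt f (f' x) x) (hf' : ∀ x ∈ Ioo a b, 0 < f' x) :
    StrictMonoOn f (Ioo a b) :=
  strictMonoOn_of_hasDerivWithinAt_pos (convex_Ioo a b)
    (fun x hx => (hf x hx).continuousAt.continuousWithinAt)
    (by simpa using fun x hx => (hf x hx).hasDerivWithinAt) (by simpa using hf')

theorem strictMonoOn_div_of_strictMonoOn_deriv_div {f g f' g' : ℝ → ℝ} {a b : ℝ}
    (hfc : ContinuousOn f (Ico a b)) (hgc : ContinuousOn g (Ico a b)) (hfa : f a = 0)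
    (hga : g a = 0) (hf : ∀ x ∈ Ioo a b, HasDerivAt f (f' x) x)
    (hg : ∀ x ∈ Ioo a b, HasDerivAt g (g' x) x) (hg' : ∀ x ∈ Ioo a b, 0 < g' x)
    (hmono : StrictMonoOn (fun x => f' x / g' x) (Ioo a b)) :
    StrictMonoOn (fun x => f x / g x) (Ioo a b) := by
  have hg_pos : ∀ x ∈ Ioo a b, 0 < g x := fun x hx => by
    obtain ⟨c, hc, hslope⟩ := exists_hasDerivAt_eq_slope g g' hx.1
      (hgc.mono (Icc_subset_Ico_right hx.2)) (fun y hy => hg y ⟨hy.1, hy.2.trans hx.2⟩)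
    have := hg' c ⟨hc.1, hc.2.trans hx.2⟩
    rw [hslope, hga, sub_zero] at this
    exact (div_pos_iff_of_pos_right (sub_pos.2 hx.1)).1 this
  -- Cauchy's mean value theorem on `[a, x]` gives `f x / g x = f' c / g' c < f' x / g' x`.
  have hwronskian : ∀ x ∈ Ioo a b, 0 < f' x * g x - f x * g' x := fun x hx => by
    obtain ⟨c, hc, hcx⟩ := exists_ratio_hasDerivAt_eq_ratio_slope f f' hx.1
      (hfc.mono (Icc_subset_Ico_right hx.2)) (fun y hy => hf y ⟨hy.1, hy.2.trans hx.2⟩)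
      g g' (hgc.mono (Icc_subset_Ico_right hx.2)) (fun y hy => hg y ⟨hy.1, hy.2.trans hx.2⟩)
    have hcI : c ∈ Ioo a b := ⟨hc.1, hc.2.trans hx.2⟩
    have hlt := hmono hcI hx hc.2
    rw [hfa, hga, sub_zero, sub_zero] at hcx
    rw [div_lt_div_iff₀ (hg' c hcI) (hg' x hx)] at hlt
    nlinarith [hg_pos x hx, hg' c hcI, hg' x hx]
  exact strictMonoOn_Ioo_of_hasDerivAt_pos
    (fun x hx => (hf x hx).div (hg x hx) (hg_pos x hx).ne')
    (fun x hx => div_pos (hwronskian x hx) (pow_pos (hg_pos x hx) 2))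

lemma sq_mul_sin_sq_le_sq (r θ : ℝ) : r ^ 2 * sin θ ^ 2 ≤ r ^ 2 :=
  mul_le_of_le_one_right (sq_nonneg r) (sin_sq_le_one θ)

lemma sq_mul_sin_sq_lt_one {r : ℝ} (hr : |r| < 1) (θ : ℝ) : r ^ 2 * sin θ ^ 2 < 1 :=
  (sq_mul_sin_sq_le_sq r θ).trans_lt ((sq_lt_one_iff_abs_lt_one r).2 hr)

lemma one_sub_sq_mul_sin_sq_pos {r : ℝ} (hr : |r| < 1) (θ : ℝ) : 0 < 1 - r ^ 2 * sin θ ^ 2 :=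
  sub_pos.2 (sq_mul_sin_sq_lt_one hr θ)

lemma sqrt_one_sub_sq_mul_sin_sq_pos {r : ℝ} (hr : |r| < 1) (θ : ℝ) :
    0 < √(1 - r ^ 2 * sin θ ^ 2) :=
  sqrt_pos.2 (one_sub_sq_mul_sin_sq_pos hr θ)

lemma ContinuousOn.comp_sq_mul_sin_sq {ψ : ℝ → ℝ} (hψ : ContinuousOn ψ (Iio 1)) {r : ℝ}
    (hr : |r| < 1) : Continuous fun θ => ψ (r ^ 2 * sin θ ^ 2) :=
  hψ.comp_continuous (by fun_prop) (sq_mul_sin_sq_lt_one hr)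

lemma continuousOn_one_div_sqrt_one_sub_pow (n : ℕ) :
    ContinuousOn (fun x : ℝ => 1 / √(1 - x) ^ n) (Iio 1) :=
  continuousOn_const.div (by fun_prop) fun x hx =>
    pow_ne_zero n (sqrt_pos.2 (sub_pos.2 hx)).ne'

lemma hasDerivAt_sqrt_one_sub {x : ℝ} (hx : x < 1) :
    HasDerivAt (fun x => √(1 - x)) (-(1 / (2 * √(1 - x)))) x := by
  convert ((hasDerivAt_id x).const_sub 1).sqrt (sub_pos.2 hx).ne' using 1 <;> simp [neg_div]

lemma hasDerivAt_one_div_sqrt_one_sub {x : ℝ} (hx : x < 1) :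
    HasDerivAt (fun x => 1 / √(1 - x)) (1 / (2 * √(1 - x) ^ 3)) x := by
  have hS := sqrt_pos.2 (sub_pos.2 hx)
  have h := (hasDerivAt_sqrt_one_sub hx).fun_inv hS.ne'
  simp only [← one_div] at h
  exact h.congr_deriv (by field_simp)

lemma hasDerivAt_integral_comp_sq_mul_sin_sq {φ φ' : ℝ → ℝ}
    (hφ : ∀ x < 1, HasDerivAt φ (φ' x) x) (hφ' : ContinuousOn φ' (Iio 1)) (a b : ℝ)
    {r : ℝ} (hr : |r| < 1) :
    HasDerivAt (fun r => ∫ θ in a..b, φ (r ^ 2 * sin θ ^ 2))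
      (∫ θ in a..b, φ' (r ^ 2 * sin θ ^ 2) * (2 * r * sin θ ^ 2)) r := by
  set c := (1 + |r|) / 2 with hc_def
  have hc : c < 1 := by linarith
  have hball : ∀ x ∈ Metric.ball r ((1 - |r|) / 2), |x| ≤ c := fun x hx => by
    have := abs_sub_abs_le_abs_sub x r
    rw [Metric.mem_ball, dist_eq] at hx
    linarith
  have hball_mem : Metric.ball r ((1 - |r|) / 2) ∈ nhds r :=
    Metric.ball_mem_nhds r (by linarith [abs_nonneg r])
  have hφc : ContinuousOn φ (Iio 1) := fun x hx => (hφ x hx).continuousAt.continuousWithinAt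
  obtain ⟨M, hM⟩ := (isCompact_Icc (a := 0) (b := c ^ 2)).exists_bound_of_continuousOn
    (hφ'.mono fun y hy => by
      have : c ^ 2 < 1 := by nlinarith [abs_nonneg r, hc_def]
      exact hy.2.trans_lt this)
  refine (intervalIntegral.hasDerivAt_integral_of_dominated_loc_of_deriv_le
    (F := fun x θ => φ (x ^ 2 * sin θ ^ 2))
    (F' := fun x θ => φ' (x ^ 2 * sin θ ^ 2) * (2 * x * sin θ ^ 2)) (μ := MeasureTheory.volume)
    (bound := fun _ => M * (2 * c)) hball_mem ?_
    ((hφc.comp_sq_mul_sin_sq hr).intervalIntegrable _ _) ?_ ?_ intervalIntegrable_const ?_).2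
  · exact Filter.eventually_of_mem hball_mem fun x hx =>
      (hφc.comp_sq_mul_sin_sq ((hball x hx).trans_lt hc)).aestronglyMeasurable
  · exact ((hφ'.comp_sq_mul_sin_sq hr).mul (by fun_prop)).aestronglyMeasurable
  · refine Filter.Eventually.of_forall fun θ _ x hx => ?_
    have hx := hball x hx
    have hφ'x : ‖φ' (x ^ 2 * sin θ ^ 2)‖ ≤ M := hM _ ⟨by positivity,
      (sq_mul_sin_sq_le_sq x θ).trans (by rw [← sq_abs x]; gcongr)⟩
    have hlin : ‖2 * x * sin θ ^ 2‖ ≤ 2 * c := by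
      rw [norm_mul, norm_mul, Real.norm_two, Real.norm_eq_abs, Real.norm_eq_abs,
        abs_of_nonneg (sq_nonneg (sin θ))]
      nlinarith [abs_nonneg x, sq_nonneg (sin θ), sin_sq_le_one θ]
    rw [norm_mul]
    exact mul_le_mul hφ'x hlin (norm_nonneg _) ((norm_nonneg _).trans hφ'x)
  · refine Filter.Eventually.of_forall fun θ _ x hx => ?_
    have h := (hφ _ (sq_mul_sin_sq_lt_one ((hball x hx).trans_lt hc) θ)).comp x
      ((hasDerivAt_pow 2 x).mul_const (sin θ ^ 2))
    exact h.congr_deriv (by norm_num)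

/-- Complete elliptic integral of the second kind. -/
noncomputable def ellE (r : ℝ) : ℝ :=
  ∫ θ in (0:ℝ)..(π / 2), √(1 - r ^ 2 * sin θ ^ 2)

lemma hasDerivAt_sq_mul_sin_mul_cos_div_sqrt {r : ℝ} (hr : |r| < 1) (θ : ℝ) :
    HasDerivAt (fun θ => r ^ 2 * (sin θ * cos θ) / √(1 - r ^ 2 * sin θ ^ 2))
      (√(1 - r ^ 2 * sin θ ^ 2) - (1 - r ^ 2) * (1 / √(1 - r ^ 2 * sin θ ^ 2) ^ 3)) θ := by
  have hu := one_sub_sq_mul_sin_sq_pos hr θ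
  have hS := sqrt_pos.2 hu
  have hSsq : √(1 - r ^ 2 * sin θ ^ 2) ^ 2 = 1 - r ^ 2 * sin θ ^ 2 := sq_sqrt hu.le
  have hnum := ((hasDerivAt_sin θ).mul (hasDerivAt_cos θ)).const_mul (r ^ 2)
  have hden := ((((hasDerivAt_sin θ).pow 2).const_mul (r ^ 2)).const_sub 1).sqrt hu.ne'
  simp only [Pi.pow_apply, Pi.mul_apply] at hnum hden
  refine (hnum.div hden hS.ne').congr_deriv ?_
  set S := √(1 - r ^ 2 * sin θ ^ 2)
  field_simp
  norm_num
  linear_combination (2 * r ^ 2 * (cos θ ^ 2 - sin θ ^ 2) - 2 * (S ^ 2 + 1 - r ^ 2 * sin θ ^ 2))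
    * hSsq + 2 * r ^ 2 * sin_sq_add_cos_sq θ

lemma intervalIntegrable_sqrt_one_sub_sq_mul_sin_sq (r a b : ℝ) :
    IntervalIntegrable (fun θ => √(1 - r ^ 2 * sin θ ^ 2)) MeasureTheory.volume a b :=
  (by fun_prop : Continuous fun θ => √(1 - r ^ 2 * sin θ ^ 2)).intervalIntegrable a b

lemma intervalIntegrable_one_div_sqrt_one_sub_sq_mul_sin_sq_pow (n : ℕ) {r : ℝ} (hr : |r| < 1)
    (a b : ℝ) :
    IntervalIntegrable (fun θ => 1 / √(1 - r ^ 2 * sin θ ^ 2) ^ n) MeasureTheory.volume a b :=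
  ((continuousOn_one_div_sqrt_one_sub_pow n).comp_sq_mul_sin_sq hr).intervalIntegrable a b

lemma one_sub_sq_mul_integral_one_div_sqrt_pow_three {r : ℝ} (hr : |r| < 1) :
    (1 - r ^ 2) * ∫ θ in (0:ℝ)..(π / 2), 1 / √(1 - r ^ 2 * sin θ ^ 2) ^ 3 = ellE r := by
  have h := integral_eq_sub_of_hasDerivAt
    (fun θ _ => hasDerivAt_sq_mul_sin_mul_cos_div_sqrt hr θ)
    ((intervalIntegrable_sqrt_one_sub_sq_mul_sin_sq r 0 (π / 2)).sub
      ((intervalIntegrable_one_div_sqrt_one_sub_sq_mul_sin_sq_pow 3 hr 0 (π / 2)).const_mul _))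
  rw [integral_sub (intervalIntegrable_sqrt_one_sub_sq_mul_sin_sq r 0 (π / 2))
    ((intervalIntegrable_one_div_sqrt_one_sub_sq_mul_sin_sq_pow 3 hr 0 (π / 2)).const_mul _),
    integral_const_mul] at h
  simp only [sin_zero, cos_pi_div_two, zero_mul, mul_zero, zero_div, sub_zero] at h
  rw [ellE]
  linarith

lemma hasDerivAt_ellK_integral {r : ℝ} (hr : |r| < 1) :
    HasDerivAt ellK
      (∫ θ in (0:ℝ)..(π / 2), 1 / (2 * √(1 - r ^ 2 * sin θ ^ 2) ^ 3) * (2 * r * sin θ ^ 2)) r :=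
  hasDerivAt_integral_comp_sq_mul_sin_sq (fun _ hx => hasDerivAt_one_div_sqrt_one_sub hx)
    (continuousOn_const.div (by fun_prop) fun _ hx =>
      (mul_pos two_pos (pow_pos (sqrt_pos.2 (sub_pos.2 hx)) 3)).ne') 0 (π / 2) hr

lemma hasDerivAt_ellK {r : ℝ} (hr0 : r ≠ 0) (hr : |r| < 1) :
    HasDerivAt ellK ((ellE r - (1 - r ^ 2) * ellK r) / (r * (1 - r ^ 2))) r := by
  refine (hasDerivAt_ellK_integral hr).congr_deriv ?_
  have hr2 : 1 - r ^ 2 ≠ 0 := (sub_pos.2 ((sq_lt_one_iff_abs_lt_one r).2 hr)).ne'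
  calc _ = ∫ θ in (0:ℝ)..(π / 2),
        r⁻¹ * (1 / √(1 - r ^ 2 * sin θ ^ 2) ^ 3 - 1 / √(1 - r ^ 2 * sin θ ^ 2)) := by
        refine integral_congr fun θ _ => ?_
        have hu := one_sub_sq_mul_sin_sq_pos hr θ
        have hSsq : √(1 - r ^ 2 * sin θ ^ 2) ^ 2 = 1 - r ^ 2 * sin θ ^ 2 := sq_sqrt hu.le
        have hS := sqrt_pos.2 hu
        field_simp
        linear_combination hSsq
    _ = r⁻¹ * ((∫ θ in (0:ℝ)..(π / 2), 1 / √(1 - r ^ 2 * sin θ ^ 2) ^ 3) - ellK r) := by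
        rw [integral_const_mul, integral_sub
          (intervalIntegrable_one_div_sqrt_one_sub_sq_mul_sin_sq_pow 3 hr 0 (π / 2))
          (by simpa using intervalIntegrable_one_div_sqrt_one_sub_sq_mul_sin_sq_pow 1 hr 0 (π / 2)),
          ellK]
    _ = _ := by
        rw [← one_sub_sq_mul_integral_one_div_sqrt_pow_three hr]
        field_simp

lemma hasDerivAt_ellE {r : ℝ} (hr0 : r ≠ 0) (hr : |r| < 1) :
    HasDerivAt ellE ((ellE r - ellK r) / r) r := by
  have h := hasDerivAt_integral_comp_sq_mul_sin_sq (fun _ hx => hasDerivAt_sqrt_one_sub hx)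
    (continuousOn_const.div (by fun_prop) fun _ hx =>
      (mul_pos two_pos (sqrt_pos.2 (sub_pos.2 hx))).ne').neg 0 (π / 2) hr
  refine h.congr_deriv ?_
  calc _ = ∫ θ in (0:ℝ)..(π / 2),
        r⁻¹ * (√(1 - r ^ 2 * sin θ ^ 2) - 1 / √(1 - r ^ 2 * sin θ ^ 2)) := by
        refine integral_congr fun θ _ => ?_
        have hu := one_sub_sq_mul_sin_sq_pos hr θ
        have hSsq : √(1 - r ^ 2 * sin θ ^ 2) ^ 2 = 1 - r ^ 2 * sin θ ^ 2 := sq_sqrt hu.le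
        have hS := sqrt_pos.2 hu
        field_simp
        linear_combination -hSsq
    _ = r⁻¹ * (ellE r - ellK r) := by
        rw [integral_const_mul, integral_sub (intervalIntegrable_sqrt_one_sub_sq_mul_sin_sq r 0 _)
          (by simpa using intervalIntegrable_one_div_sqrt_one_sub_sq_mul_sin_sq_pow 1 hr 0 (π / 2)),
          ellE, ellK]
    _ = _ := inv_mul_eq_div _ _

lemma ellK_pos {r : ℝ} (hr : |r| < 1) : 0 < ellK r :=
  intervalIntegral_pos_of_pos (by simpa using
    intervalIntegrable_one_div_sqrt_one_sub_sq_mul_sin_sq_pow 1 hr 0 (π / 2))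
    (fun θ => one_div_pos.2 (sqrt_one_sub_sq_mul_sin_sq_pos hr θ)) (by positivity)

lemma ellE_pos {r : ℝ} (hr : |r| < 1) : 0 < ellE r :=
  intervalIntegral_pos_of_pos (intervalIntegrable_sqrt_one_sub_sq_mul_sin_sq r 0 _)
    (sqrt_one_sub_sq_mul_sin_sq_pos hr) (by positivity)

lemma one_sub_sq_mul_ellK_lt_ellE {r : ℝ} (hr0 : r ≠ 0) (hr : |r| < 1) :
    (1 - r ^ 2) * ellK r < ellE r := by
  have hK : IntervalIntegrable (fun θ => 1 / √(1 - r ^ 2 * sin θ ^ 2)) MeasureTheory.volume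
      0 (π / 2) := by
    simpa using intervalIntegrable_one_div_sqrt_one_sub_sq_mul_sin_sq_pow 1 hr 0 (π / 2)
  rw [← sub_pos, ellE, ellK, ← integral_const_mul,
    ← integral_sub (intervalIntegrable_sqrt_one_sub_sq_mul_sin_sq r 0 _) (hK.const_mul _)]
  refine intervalIntegral_pos_of_pos_on
    ((intervalIntegrable_sqrt_one_sub_sq_mul_sin_sq r 0 _).sub (hK.const_mul _))
    (fun θ hθ => ?_) (by positivity)
  have hu := one_sub_sq_mul_sin_sq_pos hr θ
  have hSsq : √(1 - r ^ 2 * sin θ ^ 2) ^ 2 = 1 - r ^ 2 * sin θ ^ 2 := sq_sqrt hu.le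
  have hS := sqrt_pos.2 hu
  have hcos : 0 < cos θ := cos_pos_of_mem_Ioo ⟨by linarith [hθ.1, pi_pos], hθ.2⟩
  have : √(1 - r ^ 2 * sin θ ^ 2) - (1 - r ^ 2) * (1 / √(1 - r ^ 2 * sin θ ^ 2))
      = r ^ 2 * cos θ ^ 2 / √(1 - r ^ 2 * sin θ ^ 2) := by
    field_simp
    linear_combination hSsq - r ^ 2 * sin_sq_add_cos_sq θ
  rw [this]
  positivity

lemma abs_lt_one_of_mem_Ico {r : ℝ} (hr : r ∈ Ico (0:ℝ) 1) : |r| < 1 :=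
  abs_lt.2 ⟨by linarith [hr.1], hr.2⟩

lemma strictMonoOn_ellK : StrictMonoOn ellK (Ioo 0 1) :=
  strictMonoOn_Ioo_of_hasDerivAt_pos
    (fun _ hr => hasDerivAt_ellK hr.1.ne' (abs_lt_one_of_mem_Ico (Ioo_subset_Ico_self hr)))
    fun r hr => by
      have := one_sub_sq_mul_ellK_lt_ellE hr.1.ne' (abs_lt_one_of_mem_Ico (Ioo_subset_Ico_self hr))
      have : 0 < 1 - r ^ 2 := by nlinarith [hr.1, hr.2]
      exact div_pos (by linarith) (by nlinarith [hr.1])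

lemma hasDerivAt_two_mul_ellE_sub_one_sub_sq_mul_ellK {r : ℝ} (hr0 : r ≠ 0) (hr : |r| < 1) :
    HasDerivAt (fun r => 2 * ellE r - (1 - r ^ 2) * ellK r)
      ((ellE r - (1 - r ^ 2) * ellK r) / r) r := by
  refine (((hasDerivAt_ellE hr0 hr).const_mul 2).sub
    (((hasDerivAt_pow 2 r).const_sub 1).mul (hasDerivAt_ellK hr0 hr))).congr_deriv ?_
  have hr2 : 1 - r ^ 2 ≠ 0 := (sub_pos.2 ((sq_lt_one_iff_abs_lt_one r).2 hr)).ne'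
  field_simp
  ring

lemma strictMonoOn_two_mul_ellE_sub_one_sub_sq_mul_ellK :
    StrictMonoOn (fun r => 2 * ellE r - (1 - r ^ 2) * ellK r) (Ioo 0 1) :=
  strictMonoOn_Ioo_of_hasDerivAt_pos
    (fun _ hr => hasDerivAt_two_mul_ellE_sub_one_sub_sq_mul_ellK hr.1.ne'
      (abs_lt_one_of_mem_Ico (Ioo_subset_Ico_self hr)))
    fun _ hr => div_pos (sub_pos.2 (one_sub_sq_mul_ellK_lt_ellE hr.1.ne'
      (abs_lt_one_of_mem_Ico (Ioo_subset_Ico_self hr)))) hr.1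

lemma strictMonoOn_ellK_mul_two_mul_ellE_sub_one_sub_sq_mul_ellK :
    StrictMonoOn (fun r => ellK r * (2 * ellE r - (1 - r ^ 2) * ellK r)) (Ioo 0 1) := by
  intro r hr s hs hrs
  have hr1 := abs_lt_one_of_mem_Ico (Ioo_subset_Ico_self hr)
  have := one_sub_sq_mul_ellK_lt_ellE hr.1.ne' hr1
  exact mul_lt_mul'' (strictMonoOn_ellK hr hs hrs)
    (strictMonoOn_two_mul_ellE_sub_one_sub_sq_mul_ellK hr hs hrs) (ellK_pos hr1).le
    (by linarith [ellE_pos hr1])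

lemma hasDerivAt_mul_ellK_sq {r : ℝ} (hr0 : r ≠ 0) (hr : |r| < 1) :
    HasDerivAt (fun r => r * ellK r ^ 2)
      (ellK r * (2 * ellE r - (1 - r ^ 2) * ellK r) / (1 - r ^ 2)) r := by
  have hr2 : 1 - r ^ 2 ≠ 0 := (sub_pos.2 ((sq_lt_one_iff_abs_lt_one r).2 hr)).ne'
  refine ((hasDerivAt_id r).mul ((hasDerivAt_ellK hr0 hr).pow 2)).congr_deriv ?_
  simp only [id, Pi.pow_apply]
  field_simp
  ring

lemma hasDerivAt_artanh {r : ℝ} (hr : |r| < 1) :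
    HasDerivAt _root_.artanh (1 / (1 - r ^ 2)) r := by
  obtain ⟨hr₁, hr₂⟩ := abs_lt.1 hr
  have hquot := ((hasDerivAt_id' r).const_add 1).fun_div ((hasDerivAt_id' r).const_sub 1)
    (sub_ne_zero.2 hr₂.ne')
  refine ((hquot.log (div_pos (by linarith) (by linarith)).ne').const_mul (1 / 2)).congr_deriv ?_
  have : 1 + r ≠ 0 := by linarith
  have : 1 - r ≠ 0 := by linarith
  have : 1 - r ^ 2 ≠ 0 := by nlinarith
  field_simp
  ring

/-- `r ↦ r K(r)² / artanh r` is strictly increasing on `(0,1)`. -/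
theorem strictMonoOn_mul_ellK_sq_div_artanh :
    StrictMonoOn (fun r : ℝ => r * ellK r ^ 2 / _root_.artanh r) (Ioo 0 1) := by
  have hI : ∀ r ∈ Ioo (0:ℝ) 1, |r| < 1 := fun r hr => abs_lt_one_of_mem_Ico (Ioo_subset_Ico_self hr)
  refine strictMonoOn_div_of_strictMonoOn_deriv_div
    (f' := fun r => ellK r * (2 * ellE r - (1 - r ^ 2) * ellK r) / (1 - r ^ 2))
    (g' := fun r => 1 / (1 - r ^ 2)) ?_ ?_ (by simp) (by simp [_root_.artanh])
    (fun r hr => hasDerivAt_mul_ellK_sq hr.1.ne' (hI r hr))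
    (fun r hr => hasDerivAt_artanh (hI r hr)) (fun r hr => ?_) ?_
  · exact fun r hr => (continuousAt_id.mul
      ((hasDerivAt_ellK_integral (abs_lt_one_of_mem_Ico hr)).continuousAt.pow 2)).continuousWithinAt
  · exact fun r hr => (hasDerivAt_artanh (abs_lt_one_of_mem_Ico hr)).continuousAt.continuousWithinAt
  · have : 0 < 1 - r ^ 2 := by nlinarith [hr.1, hr.2]
    positivity
  · refine strictMonoOn_ellK_mul_two_mul_ellE_sub_one_sub_sq_mul_ellK.congr fun r hr => ?_
    have : 1 - r ^ 2 ≠ 0 := by nlinarith [hr.1, hr.2]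
    field_simp
end

section
/- Let G be a proper convex subdomain of ℝⁿ, x, y ∈ G, and t = e^{j_G(x,y)} − 1. Then arcsin(t/(t+2)) ≤ v_G(x,y) ≤ 2 arcsin(t/√(4+t²)). -/
/-!
Put `r = min (d x) (d y)` and `c = |x - y|`, so that `t = c / r`.

Upper bound: by convexity the `r`-neighbourhood of the segment `[x, y]` lies in `G`, so every
boundary point `z` is at distance at least `r` from every point of `[x, y]`, and a point that far
from a segment of length `c` sees it under an angle `θ` with `tan (θ / 2) ≤ c / (2 r)`.

Lower bound: say `d x ≤ d y`. A supporting hyperplane of `G` at a boundary point nearest to `x`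
lies at distance `ρ ≤ d x` from `x` and at least `ρ` from `y`. In the plane through `x` and `y`
orthogonal to it, let `T` be the point where the circle through `x` and the point at height `c`
above `x` touches the hyperplane. The segment `[x, T]` leaves `G` at some `z ∈ ∂G`, and every
point of `[x, T]` sees `[x, y]` under an angle at least the inscribed angle
`arcsin (c / (c + 2 ρ))` of that circle.
-/

open Real Set Metric

/-- The visual angle metric. -/
noncomputable def visualAngle {n : ℕ} (G : Set (EuclideanSpace ℝ (Fin n)))
    (x y : EuclideanSpace ℝ (Fin n)) : ℝ :=
  sSup ((fun z => EuclideanGeometry.angle x z y) '' frontier G)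

/-- The distance ratio metric `j_G`. -/
noncomputable def jMetric {n : ℕ} (G : Set (EuclideanSpace ℝ (Fin n)))
    (x y : EuclideanSpace ℝ (Fin n)) : ℝ :=
  Real.log (1 + dist x y / min (infDist x (frontier G)) (infDist y (frontier G)))

open scoped InnerProductSpace

theorem IsPreconnected.inter_frontier_nonempty {X : Type*} [TopologicalSpace X] {s t : Set X}
    (hs : IsPreconnected s) (hst : (s ∩ t).Nonempty) (hst' : (s \ t).Nonempty) :
    (s ∩ frontier t).Nonempty := by
  by_contra h
  have hint : ∀ p ∈ s, p ∈ closure t → p ∈ interior t := fun p hp hcl ↦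
    by_contra fun hpi ↦ h ⟨p, hp, hcl, hpi⟩
  obtain ⟨p, hps, hpt⟩ := hst
  have hsub : s ⊆ interior t :=
    hs.subset_of_closure_inter_subset isOpen_interior ⟨p, hps, hint p hps (subset_closure hpt)⟩
      fun q ⟨hq, hqs⟩ ↦ hint q hqs (closure_mono interior_subset hq)
  obtain ⟨q, hqs, hqt⟩ := hst'
  exact hqt (interior_subset (hsub hqs))

section NormedSpace

variable {E : Type*} [NormedAddCommGroup E] [NormedSpace ℝ E]

theorem ball_infDist_frontier_subset {t : Set E} {x : E} (hx : x ∈ t) :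
    ball x (infDist x (frontier t)) ⊆ t := by
  intro w hw
  by_contra hwt
  obtain ⟨p, hp, hpf⟩ := (convex_ball x _).isPreconnected.inter_frontier_nonempty
    ⟨x, mem_ball_self (pos_of_mem_ball hw), hx⟩ ⟨w, hw, hwt⟩
  exact ball_infDist_subset_compl hp hpf

theorem infDist_frontier_pos {G : Set E} (hG : IsOpen G) (hGu : G ≠ univ) {x : E} (hx : x ∈ G) :
    0 < infDist x (frontier G) :=
  (isClosed_frontier.notMem_iff_infDist_pos (nonempty_frontier_iff.2 ⟨⟨x, hx⟩, hGu⟩)).1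
    fun hxf ↦ hG.inter_frontier_eq.subset ⟨hx, hxf⟩

theorem Convex.ball_subset_of_mem_segment {G : Set E} (hG : Convex ℝ G) {x y p : E} {r : ℝ}
    (hx : ball x r ⊆ G) (hy : ball y r ⊆ G) (hp : p ∈ segment ℝ x y) : ball p r ⊆ G := by
  obtain ⟨a, b, ha, hb, hab, rfl⟩ := hp
  intro w hw
  set δ := w - (a • x + b • y)
  have hδ : ‖δ‖ < r := by rwa [← dist_eq_norm]
  have hw : w = a • (x + δ) + b • (y + δ) := by
    rw [smul_add, smul_add, add_add_add_comm, ← add_smul, hab, one_smul]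
    simp [δ]
  rw [hw]
  refine hG (hx ?_) (hy ?_) ha hb hab <;> simpa [dist_eq_norm] using hδ

end NormedSpace

-- `(c ^ 2 - (u - v) ^ 2) / ((u + v) ^ 2 - c ^ 2)` is `tan² (θ / 2)` for the angle `θ` opposite
-- the side `c` of a triangle with sides `u, v, c`; `h` says that the opposite vertex is at
-- distance at least `r` from every point of the side `c`.
theorem half_angle_tan_sq_le {r c u v : ℝ} (hu : 0 ≤ u) (hv : 0 ≤ v)
    (hcuv : c ≤ u + v) (huv : u ≤ c + v) (hvu : v ≤ c + u)
    (h : ∀ μ ∈ Icc (0:ℝ) 1, r ^ 2 ≤ (1 - μ) * u ^ 2 + μ * v ^ 2 - μ * (1 - μ) * c ^ 2) :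
    4 * r ^ 2 * (c ^ 2 - (u - v) ^ 2) ≤ c ^ 2 * ((u + v) ^ 2 - c ^ 2) := by
  wlog huv2 : u ≤ v generalizing u v
  · rw [← neg_sub v u, neg_sq, add_comm u v]
    refine this hv hu (by linarith) hvu huv (fun μ hμ ↦ ?_) (by linarith)
    have := h (1 - μ) ⟨by linarith [hμ.2], by linarith [hμ.1]⟩
    rw [sub_sub_cancel] at this
    linarith
  have hA : 0 ≤ c ^ 2 - (u - v) ^ 2 := by nlinarith
  have hB : 0 ≤ (u + v) ^ 2 - c ^ 2 := by nlinarith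
  rcases le_or_gt (c ^ 2 + u ^ 2) (v ^ 2) with hfoot | hfoot
  · have hru : r ^ 2 ≤ u ^ 2 := by simpa using h 0 (by simp)
    nlinarith [mul_le_mul_of_nonneg_right hru hA,
      mul_nonneg (mul_nonneg hu (sub_nonneg.2 huv2)) (sq_nonneg c),
      mul_nonneg (sq_nonneg c) (by linarith : 0 ≤ v ^ 2 - u ^ 2 - c ^ 2)]
  · have hc : 0 < c := by nlinarith
    -- the foot of the altitude onto the side `c`
    have hμ := h ((c ^ 2 + u ^ 2 - v ^ 2) / (2 * c ^ 2)) ⟨by positivity, ?_⟩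
    · have hheight : 4 * c ^ 2 * r ^ 2 ≤ (c ^ 2 - (u - v) ^ 2) * ((u + v) ^ 2 - c ^ 2) := by
        have := mul_le_mul_of_nonneg_left hμ (by positivity : (0:ℝ) ≤ 4 * c ^ 2)
        field_simp at this
        nlinarith
      nlinarith [mul_le_mul_of_nonneg_left hheight hA, mul_nonneg hB (sq_nonneg (u - v))]
    · rw [div_le_one (by positivity)]
      nlinarith

-- The squared cosine of the angle between `(ρ, -s)` and `(a + τ ρ, b - τ s)` is at most
-- `(2 s / (c + 2 ρ)) ^ 2`.
theorem inscribed_angle_cos_sq_le {ρ c s a b τ : ℝ} (hρ : 0 < ρ) (hc : 0 ≤ c)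
    (hs2 : s ^ 2 = ρ ^ 2 + ρ * c) (hs : 0 ≤ s) (ha : 0 ≤ a) (hb : 0 ≤ b)
    (habc : a ^ 2 + b ^ 2 = c ^ 2) (hτ : τ ≤ 1) (hL : 0 ≤ ρ * (a + τ * ρ) - s * (b - τ * s)) :
    (c + 2 * ρ) ^ 2 * (ρ * (a + τ * ρ) - s * (b - τ * s)) ^ 2
      ≤ 4 * s ^ 2 * ((ρ ^ 2 + s ^ 2) * ((a + τ * ρ) ^ 2 + (b - τ * s) ^ 2)) := by
  set L := ρ * (a + τ * ρ) - s * (b - τ * s)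
  set M := s * a + ρ * b
  have hLM : (ρ ^ 2 + s ^ 2) * ((a + τ * ρ) ^ 2 + (b - τ * s) ^ 2) = L ^ 2 + M ^ 2 := by ring
  have hρs : ρ ≤ s := by nlinarith
  have hcab : c ≤ a + b := by nlinarith [sq_nonneg (a + b - c)]
  have hcL : c * L ≤ 2 * s * M := by
    have hid : 2 * s * M - c * L = (c + 2 * ρ) * (ρ * a + s * b - τ * ρ * c) := by
      linear_combination (2 * a - τ * c) * hs2
    have : τ * ρ * c ≤ ρ * a + s * b := by
      nlinarith [mul_le_mul_of_nonneg_right hρs hb,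
        mul_le_mul_of_nonneg_right hτ (by positivity : 0 ≤ ρ * c)]
    nlinarith [mul_nonneg (by positivity : 0 ≤ c + 2 * ρ) (sub_nonneg.2 this)]
  have hsq : (c + 2 * ρ) ^ 2 = c ^ 2 + 4 * s ^ 2 := by linear_combination -4 * hs2
  rw [hLM, hsq]
  nlinarith [pow_le_pow_left₀ (mul_nonneg hc hL) hcL 2]

section InnerProductSpace

variable {E : Type*} [NormedAddCommGroup E] [InnerProductSpace ℝ E]

theorem inner_smul_add_smul_of_orthonormal {u e : E} (hu : ‖u‖ = 1) (he : ‖e‖ = 1)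
    (hue : ⟪u, e⟫_ℝ = 0) (α β γ δ : ℝ) :
    ⟪α • u + β • e, γ • u + δ • e⟫_ℝ = α * γ + β * δ := by
  simp only [inner_add_left, inner_add_right, real_inner_smul_left, real_inner_smul_right,
    real_inner_self_eq_norm_sq, hu, he, hue, real_inner_comm u e]
  ring

theorem norm_smul_add_smul_of_orthonormal {u e : E} (hu : ‖u‖ = 1) (he : ‖e‖ = 1)
    (hue : ⟪u, e⟫_ℝ = 0) (α β : ℝ) :
    ‖α • u + β • e‖ = √(α ^ 2 + β ^ 2) := by
  rw [norm_eq_sqrt_real_inner, inner_smul_add_smul_of_orthonormal hu he hue]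
  ring_nf

theorem exists_norm_eq_one_inner_eq_zero (hE : 2 ≤ Module.finrank ℝ E) (u : E) :
    ∃ e : E, ‖e‖ = 1 ∧ ⟪u, e⟫_ℝ = 0 := by
  have : FiniteDimensional ℝ E := .of_finrank_pos (by omega)
  have hK : (ℝ ∙ u)ᗮ ≠ ⊥ := by
    intro hbot
    have := (ℝ ∙ u).finrank_add_finrank_orthogonal
    rw [hbot, finrank_bot] at this
    have : Module.finrank ℝ (ℝ ∙ u) ≤ 1 := (finrank_span_le_card ({u} : Set E)).trans (by simp)
    omega
  obtain ⟨w, hw, hw0⟩ := Submodule.exists_mem_ne_zero_of_ne_bot hK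
  refine ⟨‖w‖⁻¹ • w, norm_smul_inv_norm (𝕜 := ℝ) hw0, ?_⟩
  rw [real_inner_smul_right, Submodule.mem_orthogonal_singleton_iff_inner_right.1 hw, mul_zero]

theorem exists_orthogonal_decomposition (hE : 2 ≤ Module.finrank ℝ E) {u : E} (hu : ‖u‖ = 1)
    (v : E) : ∃ e : E, ∃ b : ℝ, ‖e‖ = 1 ∧ ⟪u, e⟫_ℝ = 0 ∧ 0 ≤ b ∧ v = ⟪v, u⟫_ℝ • u + b • e := by
  set w := v - ⟪v, u⟫_ℝ • u
  have hvw : v = ⟪v, u⟫_ℝ • u + w := by simp [w]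
  by_cases hw : w = 0
  · obtain ⟨e, he, hue⟩ := exists_norm_eq_one_inner_eq_zero hE u
    exact ⟨e, 0, he, hue, le_rfl, by simpa [hw] using hvw⟩
  · refine ⟨‖w‖⁻¹ • w, ‖w‖, norm_smul_inv_norm (𝕜 := ℝ) hw, ?_, norm_nonneg w, ?_⟩
    · rw [real_inner_smul_right, inner_sub_right, real_inner_smul_right,
        real_inner_self_eq_norm_sq, hu, real_inner_comm]
      ring
    · rwa [smul_inv_smul₀ (norm_ne_zero_iff.2 hw)]

theorem Convex.exists_norm_eq_one_inner_lt [CompleteSpace E] {G : Set E} (hG : Convex ℝ G)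
    (hGo : IsOpen G) (hne : G.Nonempty) {z : E} (hz : z ∉ G) :
    ∃ u : E, ‖u‖ = 1 ∧ ∀ g ∈ G, ⟪z, u⟫_ℝ < ⟪g, u⟫_ℝ := by
  obtain ⟨f, hf⟩ := geometric_hahn_banach_open_point hG hGo hz
  set w := (InnerProductSpace.toDual ℝ E).symm f
  have hw : ∀ g ∈ G, ⟪w, g⟫_ℝ < ⟪w, z⟫_ℝ := by
    simpa only [w, InnerProductSpace.toDual_symm_apply] using hf
  have hw0 : w ≠ 0 := by
    rintro h
    obtain ⟨g, hg⟩ := hne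
    simpa [h] using hw g hg
  refine ⟨-(‖w‖⁻¹ • w), by rw [norm_neg]; exact norm_smul_inv_norm (𝕜 := ℝ) hw0, fun g hg ↦ ?_⟩
  simp only [inner_neg_right, real_inner_smul_right, neg_lt_neg_iff, real_inner_comm w] at hw ⊢
  exact mul_lt_mul_of_pos_left (hw g hg) (by positivity)

theorem Convex.exists_halfspace_supset [ProperSpace E] {G : Set E} (hG : Convex ℝ G)
    (hGo : IsOpen G) (hGu : G ≠ univ) {x : E} (hx : x ∈ G) :
    ∃ u : E, ‖u‖ = 1 ∧ ∃ h : ℝ, (∀ g ∈ G, h < ⟪g, u⟫_ℝ) ∧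
      ⟪x, u⟫_ℝ - h ≤ infDist x (frontier G) := by
  obtain ⟨z, hz, hxz⟩ := isClosed_frontier.exists_infDist_eq_dist
    (nonempty_frontier_iff.2 ⟨⟨x, hx⟩, hGu⟩) x
  obtain ⟨u, hu, hGu⟩ := hG.exists_norm_eq_one_inner_lt hGo ⟨x, hx⟩
    fun hzG ↦ hGo.inter_frontier_eq.subset ⟨hzG, hz⟩
  refine ⟨u, hu, ⟪z, u⟫_ℝ, hGu, ?_⟩
  rw [← inner_sub_left, hxz, dist_eq_norm]
  simpa [hu] using real_inner_le_norm (x - z) u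

theorem infDist_frontier_le_inner_sub {G : Set E} {u : E} {h : ℝ} (hu : ‖u‖ = 1)
    (hG : ∀ g ∈ G, h < ⟪g, u⟫_ℝ) {y : E} (hy : y ∈ G) :
    infDist y (frontier G) ≤ ⟪y, u⟫_ℝ - h := by
  by_contra hlt
  set p := y - (⟪y, u⟫_ℝ - h) • u
  have hp : p ∈ G := ball_infDist_frontier_subset hy <| by
    rw [mem_ball, dist_eq_norm, sub_sub_cancel_left, norm_neg, norm_smul, hu, mul_one,
      Real.norm_of_nonneg (by linarith [hG y hy])]
    exact not_le.1 hlt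
  have := hG p hp
  simp only [p, inner_sub_left, real_inner_smul_left, real_inner_self_eq_norm_sq, hu] at this
  linarith

theorem dist_sq_add_smul_sub (x y z : E) (μ : ℝ) :
    dist z (x + μ • (y - x)) ^ 2
      = (1 - μ) * dist z x ^ 2 + μ * dist z y ^ 2 - μ * (1 - μ) * dist x y ^ 2 := by
  have hzp : z - (x + μ • (y - x)) = (1 - μ) • (z - x) + μ • (z - y) := by module
  have hxy : x - y = (z - y) - (z - x) := by abel
  simp only [dist_eq_norm, hzp, hxy, ← real_inner_self_eq_norm_sq, inner_add_left,
    inner_add_right, inner_sub_left, inner_sub_right, real_inner_smul_left, real_inner_smul_right,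
    real_inner_comm (z - x)]
  ring

theorem angle_le_two_mul_arctan_of_le_dist {x y z : E} {r : ℝ} (hr : 0 < r)
    (h : ∀ p ∈ segment ℝ x y, r ≤ dist z p) :
    EuclideanGeometry.angle x z y ≤ 2 * arctan (dist x y / (2 * r)) := by
  have hseg : ∀ μ ∈ Icc (0:ℝ) 1, r ^ 2 ≤
      (1 - μ) * dist x z ^ 2 + μ * dist y z ^ 2 - μ * (1 - μ) * dist x y ^ 2 := by
    intro μ hμ
    have hp : x + μ • (y - x) ∈ segment ℝ x y := by rw [segment_eq_image']; exact ⟨μ, hμ, rfl⟩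
    rw [dist_comm x z, dist_comm y z, ← dist_sq_add_smul_sub]
    exact pow_le_pow_left₀ hr.le (h _ hp) 2
  have hu : r ≤ dist x z := dist_comm z x ▸ h x (left_mem_segment ℝ x y)
  have hv : r ≤ dist y z := dist_comm z y ▸ h y (right_mem_segment ℝ x y)
  have hlaw := EuclideanGeometry.law_cos x z y
  set θ := EuclideanGeometry.angle x z y
  set u := dist x z
  set v := dist y z
  set c := dist x y
  have htan := half_angle_tan_sq_le (hr.le.trans hu) (hr.le.trans hv) (dist_triangle_right x y z)
    (dist_triangle x y z) (dist_triangle_left y z x) hseg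
  have hcosB : cos (2 * arctan (c / (2 * r))) = (4 * r ^ 2 - c ^ 2) / (4 * r ^ 2 + c ^ 2) := by
    rw [cos_two_mul, cos_sq_arctan]
    field_simp
    ring
  have hB : 2 * arctan (c / (2 * r)) ∈ Icc 0 π :=
    ⟨by linarith [arctan_nonneg.2 (by positivity : 0 ≤ c / (2 * r))],
      by linarith [arctan_lt_pi_div_two (c / (2 * r))]⟩
  refine (strictAntiOn_cos.le_iff_ge hB
    ⟨EuclideanGeometry.angle_nonneg x z y, EuclideanGeometry.angle_le_pi x z y⟩).1 ?_
  rw [hcosB, div_le_iff₀ (by positivity)]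
  refine le_of_mul_le_mul_right ?_ (by nlinarith : 0 < 2 * u * v)
  linear_combination htan - (4 * r ^ 2 + c ^ 2) * hlaw

theorem arcsin_le_angle_of_orthonormal {u e : E} (hu : ‖u‖ = 1) (he : ‖e‖ = 1)
    (hue : ⟪u, e⟫_ℝ = 0) {ρ c s a b τ : ℝ} (hρ : 0 < ρ) (hc : 0 ≤ c)
    (hs2 : s ^ 2 = ρ ^ 2 + ρ * c) (hs : 0 ≤ s) (ha : 0 ≤ a) (hb : 0 ≤ b)
    (habc : a ^ 2 + b ^ 2 = c ^ 2) (hτ : 0 ≤ τ) (hτ1 : τ ≤ 1) :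
    arcsin (c / (c + 2 * ρ)) ≤
      InnerProductGeometry.angle (τ • (ρ • u - s • e)) ((a + τ * ρ) • u + (b - τ * s) • e) := by
  rcases hτ.eq_or_lt with rfl | hτ
  · rw [zero_smul, InnerProductGeometry.angle_zero_left]
    exact arcsin_le_pi_div_two _
  have hcos : cos (arcsin (c / (c + 2 * ρ))) = 2 * s / (c + 2 * ρ) := by
    rw [cos_arcsin, show 1 - (c / (c + 2 * ρ)) ^ 2 = (2 * s / (c + 2 * ρ)) ^ 2 by
      field_simp; linear_combination -4 * hs2, sqrt_sq (by positivity)]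
  rw [InnerProductGeometry.angle_smul_left_of_pos _ _ hτ, sub_eq_add_neg, ← neg_smul,
    InnerProductGeometry.angle, ← arccos_cos (arcsin_nonneg.2 (by positivity))
      ((arcsin_le_pi_div_two _).trans (by linarith [pi_pos])), hcos]
  refine arccos_le_arccos ?_
  rw [inner_smul_add_smul_of_orthonormal hu he hue, norm_smul_add_smul_of_orthonormal hu he hue,
    norm_smul_add_smul_of_orthonormal hu he hue, ← sqrt_mul (by positivity)]
  set L := ρ * (a + τ * ρ) + -s * (b - τ * s)
  rcases le_total L 0 with hL | hL
  · exact (div_nonpos_of_nonpos_of_nonneg hL (sqrt_nonneg _)).trans (by positivity)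
  refine div_le_of_le_mul₀ (sqrt_nonneg _) (by positivity) ?_
  refine le_of_pow_le_pow_left₀ two_ne_zero (by positivity) ?_
  rw [mul_pow, sq_sqrt (by positivity), div_pow, div_mul_eq_mul_div, le_div_iff₀ (by positivity)]
  linear_combination inscribed_angle_cos_sq_le hρ hc hs2 hs ha hb habc hτ1 (by linarith)

theorem exists_mem_frontier_arcsin_le_angle_of_forall_lt_inner (hE : 2 ≤ Module.finrank ℝ E)
    {G : Set E} {u : E} {h : ℝ} (hu : ‖u‖ = 1) (hG : ∀ g ∈ G, h < ⟪g, u⟫_ℝ) {x y : E} (hx : x ∈ G)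
    (hxy : ⟪x, u⟫_ℝ ≤ ⟪y, u⟫_ℝ) :
    ∃ z ∈ frontier G,
      arcsin (dist x y / (dist x y + 2 * (⟪x, u⟫_ℝ - h))) ≤ EuclideanGeometry.angle x z y := by
  set ρ := ⟪x, u⟫_ℝ - h with hρ_def
  have hρ : 0 < ρ := sub_pos.2 (hG x hx)
  obtain ⟨e, b, he, hue, hb, hyx⟩ := exists_orthogonal_decomposition hE hu (y - x)
  have habc : ⟪y - x, u⟫_ℝ ^ 2 + b ^ 2 = dist x y ^ 2 := by
    have := norm_smul_add_smul_of_orthonormal hu he hue ⟪y - x, u⟫_ℝ b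
    rw [← hyx] at this
    rw [dist_comm, dist_eq_norm, this, sq_sqrt (by positivity)]
  have ha : 0 ≤ ⟪y - x, u⟫_ℝ := by rw [inner_sub_left]; linarith
  set a := ⟪y - x, u⟫_ℝ
  set c := dist x y
  -- `T` is where the circle through `x` and `x + c • u` touches the hyperplane `⟪·, u⟫ = h`,
  -- at horizontal distance `s` from `x` by the power of the point `x - ρ • u`.
  set s := √(ρ ^ 2 + ρ * c)
  have hs2 : s ^ 2 = ρ ^ 2 + ρ * c := sq_sqrt (by positivity)
  set T := x + (s • e - ρ • u)
  have hT : T ∉ G := fun hT ↦ by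
    have := hG T hT
    simp only [T, inner_add_left, inner_sub_left, real_inner_smul_left,
      real_inner_self_eq_norm_sq, hu, real_inner_comm u e, hue] at this
    linarith [hρ_def]
  obtain ⟨z, hzT, hz⟩ := (convex_segment x T).isPreconnected.inter_frontier_nonempty
    ⟨x, left_mem_segment ℝ x T, hx⟩ ⟨T, right_mem_segment ℝ x T, hT⟩
  rw [segment_eq_image'] at hzT
  obtain ⟨τ, ⟨hτ, hτ1⟩, rfl⟩ := hzT
  refine ⟨_, hz, ?_⟩
  have hxz : x - (x + τ • (T - x)) = τ • (ρ • u - s • e) := by simp only [T]; module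
  have hyz : y - (x + τ • (T - x)) = (a + τ * ρ) • u + (b - τ * s) • e := by
    rw [show y - (x + τ • (T - x)) = (y - x) - τ • (T - x) by abel, hyx]
    simp only [T]
    module
  rw [EuclideanGeometry.angle, vsub_eq_sub, vsub_eq_sub, hxz, hyz]
  exact arcsin_le_angle_of_orthonormal hu he hue hρ dist_nonneg hs2 (sqrt_nonneg _) ha hb habc hτ
    hτ1

theorem Convex.exists_mem_frontier_arcsin_le_angle [ProperSpace E]
    (hE : 2 ≤ Module.finrank ℝ E) {G : Set E} (hG : Convex ℝ G) (hGo : IsOpen G) (hGu : G ≠ univ)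
    {x y : E} (hx : x ∈ G) (hy : y ∈ G) (hle : infDist x (frontier G) ≤ infDist y (frontier G)) :
    ∃ z ∈ frontier G, arcsin (dist x y / (dist x y + 2 * infDist x (frontier G))) ≤
      EuclideanGeometry.angle x z y := by
  obtain ⟨u, hu, h, hGh, hρ⟩ := hG.exists_halfspace_supset hGo hGu hx
  have hxy : ⟪x, u⟫_ℝ ≤ ⟪y, u⟫_ℝ := by
    linarith [infDist_frontier_le_inner_sub hu hGh hy]
  obtain ⟨z, hz, hangle⟩ :=
    exists_mem_frontier_arcsin_le_angle_of_forall_lt_inner hE hu hGh hx hxy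
  refine ⟨z, hz, (arcsin_le_arcsin ?_).trans hangle⟩
  exact div_le_div_of_nonneg_left dist_nonneg
    (by linarith [hGh x hx, dist_nonneg (x := x) (y := y)]) (by linarith)

end InnerProductSpace

theorem visualAngle_comm {n : ℕ} (G : Set (EuclideanSpace ℝ (Fin n)))
    (x y : EuclideanSpace ℝ (Fin n)) : visualAngle G x y = visualAngle G y x := by
  simp only [visualAngle, EuclideanGeometry.angle_comm x]

theorem angle_le_visualAngle {n : ℕ} {G : Set (EuclideanSpace ℝ (Fin n))}
    {x y z : EuclideanSpace ℝ (Fin n)} (hz : z ∈ frontier G) :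
    EuclideanGeometry.angle x z y ≤ visualAngle G x y :=
  le_csSup ⟨π, forall_mem_image.2 fun _ _ ↦ EuclideanGeometry.angle_le_pi _ _ _⟩ ⟨z, hz, rfl⟩

theorem exp_jMetric_sub_one {n : ℕ} (G : Set (EuclideanSpace ℝ (Fin n)))
    (x y : EuclideanSpace ℝ (Fin n)) :
    exp (jMetric G x y) - 1 =
      dist x y / min (infDist x (frontier G)) (infDist y (frontier G)) := by
  have hq : 0 ≤ dist x y / min (infDist x (frontier G)) (infDist y (frontier G)) :=
    div_nonneg dist_nonneg (le_min infDist_nonneg infDist_nonneg)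
  rw [jMetric, exp_log (by linarith)]
  ring

theorem arcsin_le_visualAngle {n : ℕ} (hn : 2 ≤ n) {G : Set (EuclideanSpace ℝ (Fin n))}
    (hG : Convex ℝ G) (hGo : IsOpen G) (hGu : G ≠ univ) {x y : EuclideanSpace ℝ (Fin n)}
    (hx : x ∈ G) (hy : y ∈ G) :
    arcsin (dist x y / (dist x y + 2 * min (infDist x (frontier G)) (infDist y (frontier G))))
      ≤ visualAngle G x y := by
  have hE : 2 ≤ Module.finrank ℝ (EuclideanSpace ℝ (Fin n)) := by rwa [finrank_euclideanSpace_fin]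
  rcases le_total (infDist x (frontier G)) (infDist y (frontier G)) with hle | hle
  · obtain ⟨z, hz, hangle⟩ := hG.exists_mem_frontier_arcsin_le_angle hE hGo hGu hx hy hle
    rw [min_eq_left hle]
    exact hangle.trans (angle_le_visualAngle hz)
  · obtain ⟨z, hz, hangle⟩ := hG.exists_mem_frontier_arcsin_le_angle hE hGo hGu hy hx hle
    rw [min_eq_right hle, dist_comm, visualAngle_comm]
    exact hangle.trans (angle_le_visualAngle hz)

theorem visualAngle_le_two_mul_arctan {n : ℕ} {G : Set (EuclideanSpace ℝ (Fin n))}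
    (hG : Convex ℝ G) (hGo : IsOpen G) (hGu : G ≠ univ) {x y : EuclideanSpace ℝ (Fin n)}
    (hx : x ∈ G) (hy : y ∈ G) :
    visualAngle G x y ≤
      2 * arctan (dist x y / (2 * min (infDist x (frontier G)) (infDist y (frontier G)))) := by
  set r := min (infDist x (frontier G)) (infDist y (frontier G))
  have hr : 0 < r := lt_min (infDist_frontier_pos hGo hGu hx) (infDist_frontier_pos hGo hGu hy)
  refine Real.sSup_le (forall_mem_image.2 fun z hz ↦ ?_) (by positivity)
  refine angle_le_two_mul_arctan_of_le_dist hr fun p hp ↦ not_lt.1 fun hzp ↦ ?_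
  have hball : ball p r ⊆ G := hG.ball_subset_of_mem_segment
    ((ball_subset_ball (min_le_left _ _)).trans (ball_infDist_frontier_subset hx))
    ((ball_subset_ball (min_le_right _ _)).trans (ball_infDist_frontier_subset hy)) hp
  exact hGo.inter_frontier_eq.subset ⟨hball hzp, hz⟩

theorem arcsin_div_sqrt_four_add_sq (t : ℝ) : arcsin (t / √(4 + t ^ 2)) = arctan (t / 2) := by
  rw [arctan_eq_arcsin, show 1 + (t / 2) ^ 2 = (4 + t ^ 2) / 2 ^ 2 by ring,
    sqrt_div' _ (by norm_num), sqrt_sq zero_le_two, div_div_div_cancel_right₀ two_ne_zero]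

theorem visualAngle_le_of_convex_general {n : ℕ} (hn : 2 ≤ n)
    (G : Set (EuclideanSpace ℝ (Fin n)))
    (hopen : IsOpen G) (hconv : Convex ℝ G) (hproper : G ≠ univ)
    (x y : EuclideanSpace ℝ (Fin n)) (hx : x ∈ G) (hy : y ∈ G)
    (t : ℝ) (ht : t = Real.exp (jMetric G x y) - 1) :
    Real.arcsin (t / (t + 2)) ≤ visualAngle G x y ∧
    visualAngle G x y ≤ 2 * Real.arcsin (t / Real.sqrt (4 + t ^ 2)) := by
  have hr : 0 < min (infDist x (frontier G)) (infDist y (frontier G)) :=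
    lt_min (infDist_frontier_pos hopen hproper hx) (infDist_frontier_pos hopen hproper hy)
  rw [exp_jMetric_sub_one] at ht
  subst ht
  constructor
  · convert arcsin_le_visualAngle hn hconv hopen hproper hx hy using 2
    field_simp
  · rw [arcsin_div_sqrt_four_add_sq, div_div, mul_comm _ (2 : ℝ)]
    exact visualAngle_le_two_mul_arctan hconv hopen hproper hx hy

/-- On a proper convex subdomain, with `t = e^{j_G(x,y)} − 1`,
`arcsin(t/(t+2)) ≤ v_G(x,y) ≤ 2 arcsin(t/√(4+t²))`. -/
theorem visualAngle_le_of_convex {n : ℕ} (hn : 2 ≤ n)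
    (G : Set (EuclideanSpace ℝ (Fin n)))
    (hopen : IsOpen G) (hconv : Convex ℝ G) (hne : G.Nonempty) (hproper : G ≠ univ)
    (x y : EuclideanSpace ℝ (Fin n)) (hx : x ∈ G) (hy : y ∈ G)
    (t : ℝ) (ht : t = Real.exp (jMetric G x y) - 1) :
    Real.arcsin (t / (t + 2)) ≤ visualAngle G x y ∧
    visualAngle G x y ≤ 2 * Real.arcsin (t / Real.sqrt (4 + t ^ 2)) :=
  visualAngle_le_of_convex_general hn G hopen hconv hproper x y hx hy t ht
end

section
/- Let a ∈ (0,1) and f : 𝔹ⁿ → 𝔹ⁿ be the radial map f(z) = z |z|^{a−1} (with f(0)=0). Fix θ ∈ (0, π/2]. For x, y ∈ 𝔹ⁿ with |x| = |y| and ∠(x,0,y) = 2θ, the ratio v_{𝔹ⁿ}(f(x),f(y)) / v_{𝔹ⁿ}(x,y) tends to ∞ as x → 0. Hence f is not a bilipschitz map with respect to the visual angle metric. -/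
/-!
For `‖x‖, ‖y‖ ≤ 1/2` the visual angle `v(x, y)` in the unit ball is comparable to `‖x - y‖`:
every boundary point sees the segment `[x, y]` from distance at least `1/2`, and when
`‖x‖ = ‖y‖` (in dimension `≥ 2`) some boundary point is equidistant from `x` and `y` at
distance at most `2`. Since `f (r • u) = r ^ a • u`, the ratio `v(f x, f y) / v(x, y)` at
`x = r • u`, `y = r • w` is therefore of order `r ^ a / r → ∞`.
-/

open Real Set Metric Filter Topology

namespace InnerProductGeometry

open RealInnerProductSpace

variable {V : Type*} [NormedAddCommGroup V] [InnerProductSpace ℝ V]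

theorem norm_mul_angle_le_pi_mul_norm_sub (p q : V) : ‖p‖ * angle p q ≤ π * ‖p - q‖ := by
  have hcos := norm_sub_sq_eq_norm_sq_add_norm_sq_sub_two_mul_norm_mul_norm_mul_cos_angle p q
  have hp := norm_nonneg p
  have hq := norm_nonneg q
  rcases le_or_gt (angle p q) (π / 2) with hA | hA
  · -- `‖p - q‖² = (‖p‖ sin A)² + (‖q‖ - ‖p‖ cos A)²`
    have hsin : ‖p‖ * sin (angle p q) ≤ ‖p - q‖ := by
      refine (pow_le_pow_iff_left₀ (mul_nonneg hp (sin_angle_nonneg p q)) (norm_nonneg _)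
        two_ne_zero).1 ?_
      nlinarith [sin_sq_add_cos_sq (angle p q), sq_nonneg (‖q‖ - ‖p‖ * cos (angle p q))]
    have hJordan := mul_le_sin (angle_nonneg p q) hA
    calc ‖p‖ * angle p q = π / 2 * (‖p‖ * (2 / π * angle p q)) := by field_simp
      _ ≤ π / 2 * ‖p - q‖ := by gcongr; exact hsin.trans' (by gcongr)
      _ ≤ π * ‖p - q‖ := by nlinarith [pi_pos, norm_nonneg (p - q)]
  · have hcos0 : cos (angle p q) ≤ 0 := cos_nonpos_of_pi_div_two_le_of_le hA.le
      (by linarith [angle_le_pi p q, pi_pos])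
    have hpq : ‖p‖ ≤ ‖p - q‖ :=
      (pow_le_pow_iff_left₀ hp (norm_nonneg _) two_ne_zero).1 (by nlinarith [mul_nonneg hp hq])
    calc ‖p‖ * angle p q ≤ ‖p - q‖ * π :=
          mul_le_mul hpq (angle_le_pi p q) (angle_nonneg p q) (norm_nonneg _)
      _ = π * ‖p - q‖ := mul_comm _ _

theorem norm_sub_le_norm_mul_angle {p q : V} (h : ‖p‖ = ‖q‖) :
    ‖p - q‖ ≤ ‖p‖ * angle p q := by
  have hcos := norm_sub_sq_eq_norm_sq_add_norm_sq_sub_two_mul_norm_mul_norm_mul_cos_angle p q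
  have := one_sub_sq_div_two_le_cos (x := angle p q)
  refine (pow_le_pow_iff_left₀ (norm_nonneg _) (mul_nonneg (norm_nonneg p) (angle_nonneg p q))
    two_ne_zero).1 ?_
  rw [← h] at hcos
  nlinarith [sq_nonneg ‖p‖]

end InnerProductGeometry

theorem exists_norm_eq_one_inner_eq_zero_s18 {V : Type*} [NormedAddCommGroup V]
    [InnerProductSpace ℝ V] [FiniteDimensional ℝ V] (hV : 2 ≤ Module.finrank ℝ V) (v : V) :
    ∃ z : V, ‖z‖ = 1 ∧ inner ℝ v z = 0 := by
  have hK : Module.finrank ℝ (ℝ ∙ v) ≤ 1 := by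
    simpa using finrank_span_le_card (R := ℝ) ({v} : Set V)
  have hsum := (ℝ ∙ v).finrank_add_finrank_orthogonal
  obtain ⟨z, hz, hz0⟩ := Submodule.exists_mem_ne_zero_of_ne_bot
    (p := (ℝ ∙ v)ᗮ) (fun h => by rw [h, finrank_bot] at hsum; omega)
  refine ⟨‖z‖⁻¹ • z, norm_smul_inv_norm hz0, ?_⟩
  rw [inner_smul_right, Submodule.mem_orthogonal_singleton_iff_inner_right.1 hz, mul_zero]

theorem norm_rpow_sub_one_smul_smul {E : Type*} [NormedAddCommGroup E] [NormedSpace ℝ E]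
    {u : E} (hu : ‖u‖ = 1) (a : ℝ) {r : ℝ} (hr : 0 < r) :
    ‖r • u‖ ^ (a - 1) • r • u = r ^ a • u := by
  rw [norm_smul, hu, mul_one, norm_of_nonneg hr.le, smul_smul, ← rpow_add_one hr.ne',
    sub_add_cancel]

section VisualAngle

variable {n : ℕ}

local notation "𝔹" => ball (0 : EuclideanSpace ℝ (Fin n)) 1

theorem angle_le_visualAngle_ball (x y : EuclideanSpace ℝ (Fin n)) {z : EuclideanSpace ℝ (Fin n)}
    (hz : ‖z‖ = 1) : EuclideanGeometry.angle x z y ≤ visualAngle 𝔹 x y := by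
  refine le_csSup ⟨π, ?_⟩ ⟨z, ?_, rfl⟩
  · rintro _ ⟨z', -, rfl⟩
    exact EuclideanGeometry.angle_le_pi x z' y
  · simpa [frontier_ball _ one_ne_zero] using hz

theorem visualAngle_ball_le {x : EuclideanSpace ℝ (Fin n)} (hx : ‖x‖ < 1)
    (y : EuclideanSpace ℝ (Fin n)) : visualAngle 𝔹 x y ≤ π * ‖x - y‖ / (1 - ‖x‖) := by
  refine Real.sSup_le ?_ (by have := sub_pos.2 hx; positivity)
  rintro _ ⟨z, hz, rfl⟩
  rw [frontier_ball _ one_ne_zero, mem_sphere_zero_iff_norm] at hz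
  have hdist : 1 - ‖x‖ ≤ ‖x - z‖ := by
    rw [norm_sub_rev]
    simpa [hz] using norm_sub_norm_le z x
  have := InnerProductGeometry.norm_mul_angle_le_pi_mul_norm_sub (x - z) (y - z)
  rw [sub_sub_sub_cancel_right] at this
  rw [le_div_iff₀ (sub_pos.2 hx), mul_comm]
  exact (mul_le_mul_of_nonneg_right hdist (EuclideanGeometry.angle_nonneg x z y)).trans this

theorem norm_sub_div_le_visualAngle_ball (hn : 2 ≤ n) {x y : EuclideanSpace ℝ (Fin n)}
    (h : ‖x‖ = ‖y‖) : ‖x - y‖ / (‖x‖ + 1) ≤ visualAngle 𝔹 x y := by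
  obtain ⟨z, hz, hxyz⟩ := exists_norm_eq_one_inner_eq_zero_s18 (by simpa using hn) (x - y)
  have heq : ‖x - z‖ = ‖y - z‖ := by
    rw [inner_sub_left] at hxyz
    refine (pow_left_inj₀ (norm_nonneg _) (norm_nonneg _) two_ne_zero).1 ?_
    rw [norm_sub_sq_real, norm_sub_sq_real, h]
    linarith
  have := InnerProductGeometry.norm_sub_le_norm_mul_angle heq
  rw [sub_sub_sub_cancel_right] at this
  refine le_trans ?_ (angle_le_visualAngle_ball x y hz)
  rw [div_le_iff₀ (by positivity), mul_comm]
  calc ‖x - y‖ ≤ ‖x - z‖ * EuclideanGeometry.angle x z y := this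
    _ ≤ (‖x‖ + 1) * EuclideanGeometry.angle x z y := by
      gcongr
      · exact EuclideanGeometry.angle_nonneg x z y
      · simpa [hz] using norm_sub_le x z

variable {u w : EuclideanSpace ℝ (Fin n)} {s : ℝ}

theorem mul_norm_sub_div_two_le_visualAngle_smul (hn : 2 ≤ n) (hu : ‖u‖ = 1) (hw : ‖w‖ = 1)
    (hs0 : 0 ≤ s) (hs1 : s ≤ 1) : s * ‖u - w‖ / 2 ≤ visualAngle 𝔹 (s • u) (s • w) := by
  have := norm_sub_div_le_visualAngle_ball hn (x := s • u) (y := s • w)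
    (by simp [norm_smul, hu, hw])
  rw [← smul_sub, norm_smul, norm_smul, hu, norm_of_nonneg hs0, mul_one] at this
  exact this.trans' (by gcongr; linarith)

theorem visualAngle_smul_pos (hn : 2 ≤ n) (hu : ‖u‖ = 1) (hw : ‖w‖ = 1) (huw : u ≠ w)
    (hs0 : 0 < s) (hs1 : s ≤ 1) : 0 < visualAngle 𝔹 (s • u) (s • w) :=
  (mul_norm_sub_div_two_le_visualAngle_smul hn hu hw hs0.le hs1).trans_lt'
    (by have := norm_sub_pos_iff.2 huw; positivity)

theorem visualAngle_smul_le (hu : ‖u‖ = 1) (w : EuclideanSpace ℝ (Fin n)) (hs0 : 0 ≤ s)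
    (hs : s ≤ 1 / 2) : visualAngle 𝔹 (s • u) (s • w) ≤ 2 * π * (s * ‖u - w‖) := by
  have hsu : ‖s • u‖ = s := by rw [norm_smul, hu, norm_of_nonneg hs0, mul_one]
  have := visualAngle_ball_le (x := s • u) (by linarith) (s • w)
  rw [← smul_sub, hsu, norm_smul, norm_of_nonneg hs0] at this
  refine this.trans ?_
  rw [div_le_iff₀ (by linarith)]
  nlinarith [mul_nonneg (mul_nonneg pi_pos.le (mul_nonneg hs0 (norm_nonneg (u - w))))
    (by linarith : 0 ≤ 1 - 2 * s)]

theorem rpow_sub_one_div_le_visualAngle_rpow_smul_div (hn : 2 ≤ n) (hu : ‖u‖ = 1)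
    (hw : ‖w‖ = 1) (huw : u ≠ w) {a r : ℝ} (ha : 0 ≤ a) (hr0 : 0 < r) (hr : r ≤ 1 / 2) :
    r ^ (a - 1) / (4 * π) ≤
      visualAngle 𝔹 (r ^ a • u) (r ^ a • w) / visualAngle 𝔹 (r • u) (r • w) := by
  have hc := norm_sub_pos_iff.2 huw
  have hlow := mul_norm_sub_div_two_le_visualAngle_smul hn hu hw (rpow_nonneg hr0.le a)
    (rpow_le_one hr0.le (by linarith) ha)
  calc r ^ (a - 1) / (4 * π) = (r ^ a * ‖u - w‖ / 2) / (2 * π * (r * ‖u - w‖)) := by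
        rw [rpow_sub_one hr0.ne']
        field_simp
        ring
    _ ≤ _ := div_le_div₀ (hlow.trans' (by positivity)) hlow
        (visualAngle_smul_pos hn hu hw huw hr0 (by linarith)) (visualAngle_smul_le hu w hr0.le hr)

end VisualAngle

/-- For `a ∈ (0,1)`, the radial map `f(z) = |z|^{a−1} z` of the unit ball: along points
`r•u, r•w` with `‖u‖ = ‖w‖ = 1` and angle `2θ` at the origin, the ratio
`v(f x, f y)/v(x,y)` tends to `∞` as `r → 0⁺`; hence `f` is not bilipschitz w.r.t. the
visual angle metric. -/
theorem radial_map_not_visualAngle_bilipschitz {n : ℕ} (hn : 2 ≤ n)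
    (a : ℝ) (ha : a ∈ Ioo (0:ℝ) 1)
    (f : EuclideanSpace ℝ (Fin n) → EuclideanSpace ℝ (Fin n))
    (hf : ∀ z, f z = (‖z‖ ^ (a - 1) : ℝ) • z)
    (θ : ℝ) (hθ : θ ∈ Ioc 0 (π / 2))
    (u w : EuclideanSpace ℝ (Fin n)) (hu : ‖u‖ = 1) (hw : ‖w‖ = 1)
    (huw : EuclideanGeometry.angle u 0 w = 2 * θ) :
    Tendsto (fun r : ℝ =>
        visualAngle (ball (0 : EuclideanSpace ℝ (Fin n)) 1) (f (r • u)) (f (r • w)) /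
        visualAngle (ball (0 : EuclideanSpace ℝ (Fin n)) 1) (r • u) (r • w))
      (𝓝[>] 0) atTop ∧
    ¬ ∃ L : ℝ, 1 ≤ L ∧
      ∀ x ∈ ball (0 : EuclideanSpace ℝ (Fin n)) 1,
      ∀ y ∈ ball (0 : EuclideanSpace ℝ (Fin n)) 1,
        visualAngle (ball (0 : EuclideanSpace ℝ (Fin n)) 1) x y / L ≤
          visualAngle (ball (0 : EuclideanSpace ℝ (Fin n)) 1) (f x) (f y) ∧
        visualAngle (ball (0 : EuclideanSpace ℝ (Fin n)) 1) (f x) (f y) ≤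
          L * visualAngle (ball (0 : EuclideanSpace ℝ (Fin n)) 1) x y := by
  have hne : u ≠ w := by
    rintro rfl
    rw [EuclideanGeometry.angle_self_of_ne (by simp [← norm_ne_zero_iff, hu])] at huw
    linarith [hθ.1]
  have hsmall : ∀ᶠ r in 𝓝[>] (0 : ℝ), r ∈ Ioc 0 (1 / 2) := Ioc_mem_nhdsGT (by norm_num)
  have hbound : ∀ᶠ r in 𝓝[>] (0 : ℝ), r ^ (a - 1) / (4 * π) ≤
      visualAngle (ball 0 1) (f (r • u)) (f (r • w)) / visualAngle (ball 0 1) (r • u) (r • w) := by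
    filter_upwards [hsmall] with r hr
    rw [hf, hf, norm_rpow_sub_one_smul_smul hu a hr.1, norm_rpow_sub_one_smul_smul hw a hr.1]
    exact rpow_sub_one_div_le_visualAngle_rpow_smul_div hn hu hw hne ha.1.le hr.1 hr.2
  have hratio := tendsto_atTop_mono' _ hbound
    ((tendsto_rpow_neg_nhdsGT_zero (sub_neg.2 ha.2)).atTop_div_const (by positivity))
  refine ⟨hratio, ?_⟩
  rintro ⟨L, -, hL⟩
  obtain ⟨r, hrL, hr0, hr⟩ := ((hratio.eventually_gt_atTop L).and hsmall).exists
  have hball : ∀ v : EuclideanSpace ℝ (Fin n), ‖v‖ = 1 → r • v ∈ ball 0 1 := fun v hv => by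
    simpa [norm_smul, hv, abs_of_pos hr0] using hr.trans_lt (by norm_num)
  have := (div_le_iff₀ (visualAngle_smul_pos hn hu hw hne hr0 (by linarith))).2
    (hL _ (hball u hu) _ (hball w hw)).2
  linarith
end
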